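/- Let n ≥ 1, let β_1,…,β_n > 0 and ω_1,…,ω_n > 0 with Σ_{k=1}^n ω_k = 1, and let λ, r ∈ ℝ. Then the unique maximizer of the extended-market growth rate G(π_0, π) = λ(1 − π_0) + r π_0 + Σ_{k=1}^n (β_k)²(π_k ω_k − (π_k)²/2) over all (π_0, π) ∈ ℝ × ℝ^n with π_0 + Σ_{k=1}^n π_k = 1 is given by π_k = (λ − r)/(β_k)² + ω_k for k = 1,…,n and π_0 = (r − λ) Σ_{k=1}^n (β_k)^{-2}. -/
import Mathlib


open Finset

/-- The growth rate of a portfolio in the extended market (savings account with interest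
rate `r` plus `n` atoms), with weight `π0` in the savings account and weights `π` in the
atoms: `G(π0, π) = λ(1 − π0) + r π0 + Σ_k (β_k)^2 (π_k ω_k − (π_k)^2 / 2)`. -/
noncomputable def extGrowthRate (n : ℕ) (lam r : ℝ) (β ω : Fin n → ℝ)
    (π0 : ℝ) (π : Fin n → ℝ) : ℝ :=
  lam * (1 - π0) + r * π0 + ∑ k, (β k) ^ 2 * (π k * ω k - (π k) ^ 2 / 2)

/-- the unique maximizer of the extended-market growth rate over all admissible
weight vectors is `π_k = (λ − r)/(β_k)^2 + ω_k` for the atoms and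
`π_0 = (r − λ) Σ_k (β_k)^{-2}` for the savings account. -/
theorem extendedMarketGOP_weights
    (n : ℕ) (hn : 1 ≤ n) (β ω : Fin n → ℝ)
    (hβ : ∀ k, 0 < β k) (hω : ∀ k, 0 < ω k)
    (hsum : ∑ k, ω k = 1) (lam r : ℝ) :
    ((r - lam) * ∑ k, ((β k) ^ 2)⁻¹) + (∑ k, ((lam - r) / (β k) ^ 2 + ω k)) = 1 ∧
    ∀ (p0 : ℝ) (p : Fin n → ℝ), p0 + ∑ k, p k = 1 →
      extGrowthRate n lam r β ω p0 p ≤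
        extGrowthRate n lam r β ω ((r - lam) * ∑ k, ((β k) ^ 2)⁻¹)
          (fun k => (lam - r) / (β k) ^ 2 + ω k) ∧
      (extGrowthRate n lam r β ω p0 p =
        extGrowthRate n lam r β ω ((r - lam) * ∑ k, ((β k) ^ 2)⁻¹)
          (fun k => (lam - r) / (β k) ^ 2 + ω k) ↔
        p0 = (r - lam) * ∑ k, ((β k) ^ 2)⁻¹ ∧
          p = fun k => (lam - r) / (β k) ^ 2 + ω k) := by
  set q : Fin n → ℝ := fun k => (lam - r) / (β k) ^ 2 + ω k with hq
  set s : ℝ := (r - lam) * ∑ k, ((β k) ^ 2)⁻¹ with hs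
  have h1 : s + ∑ k, q k = 1 := by
    have hqsum : ∑ k, q k = (lam - r) * (∑ k, ((β k) ^ 2)⁻¹) + 1 := by
      simp only [hq, Finset.sum_add_distrib, hsum, Finset.mul_sum, div_eq_mul_inv]
    rw [hqsum, hs]; ring
  -- rewrite the growth rate for admissible portfolios
  have hG : ∀ (p0 : ℝ) (p : Fin n → ℝ), p0 + ∑ k, p k = 1 →
      extGrowthRate n lam r β ω p0 p
        = r + ∑ k, ((lam - r) * p k + (β k) ^ 2 * (p k * ω k - (p k) ^ 2 / 2)) := by
    intro p0 p hp
    have h0 : p0 = 1 - ∑ k, p k := by linarith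
    unfold extGrowthRate
    rw [Finset.sum_add_distrib, ← Finset.mul_sum, h0]; ring
  have hterm : ∀ (k : Fin n) (x : ℝ),
      (lam - r) * x + (β k) ^ 2 * (x * ω k - x ^ 2 / 2)
        = ((lam - r) * q k + (β k) ^ 2 * (q k * ω k - (q k) ^ 2 / 2))
          - (β k) ^ 2 / 2 * (x - q k) ^ 2 := by
    intro k x
    have hb : (β k) ≠ 0 := (hβ k).ne'
    simp only [hq]
    field_simp
    ring
  refine ⟨h1, ?_⟩
  intro p0 p hp
  have hGp := hG p0 p hp
  have hGq := hG s q h1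
  have hdiff : extGrowthRate n lam r β ω s q - extGrowthRate n lam r β ω p0 p
      = ∑ k, (β k) ^ 2 / 2 * (p k - q k) ^ 2 := by
    rw [hGp, hGq]
    rw [show (∑ k, ((lam - r) * p k + (β k) ^ 2 * (p k * ω k - (p k) ^ 2 / 2)))
        = ∑ k, (((lam - r) * q k + (β k) ^ 2 * (q k * ω k - (q k) ^ 2 / 2))
          - (β k) ^ 2 / 2 * (p k - q k) ^ 2) from
      Finset.sum_congr rfl fun k _ => hterm k (p k)]
    rw [Finset.sum_sub_distrib]
    ring
  have hnonneg : ∀ k ∈ Finset.univ, 0 ≤ (β k) ^ 2 / 2 * (p k - q k) ^ 2 := by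
    intro k _; positivity
  have hle : extGrowthRate n lam r β ω p0 p ≤ extGrowthRate n lam r β ω s q := by
    have := Finset.sum_nonneg hnonneg
    linarith
  refine ⟨hle, ?_, ?_⟩
  · intro heq
    have hzero : ∑ k, (β k) ^ 2 / 2 * (p k - q k) ^ 2 = 0 := by linarith
    have hall := (Finset.sum_eq_zero_iff_of_nonneg hnonneg).mp hzero
    have hpq : p = q := by
      funext k
      have hk := hall k (Finset.mem_univ k)
      have hbk := hβ k
      have hb : (β k) ^ 2 / 2 ≠ 0 := by positivity
      have : (p k - q k) ^ 2 = 0 := by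
        rcases mul_eq_zero.mp hk with h | h
        · exact absurd h hb
        · exact h
      have := pow_eq_zero_iff (n := 2) (by norm_num) |>.mp this
      linarith
    have hp0 : p0 = s := by
      rw [hpq] at hp; linarith
    exact ⟨hp0, hpq⟩
  · rintro ⟨hp0, hpq⟩
    rw [hp0, hpq]
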